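/- Suppose for the product ensemble ⊗_{l=1}^L E^l and a tuple x ∈ N_n it holds that η_x ρ_x − η_c ρ_c is block positive for all c ∈ N_n. Then p_L(⊗_l E^l) = p_SEP(⊗_l E^l) = η_x, and the optimal LOCC discrimination is factorizable: p_L(⊗_l E^l) = Π_l p_L(E^l), with p_L(E^l) = η_{x_l}^l for each l. -/

import Mathlib

/-!
Block positivity of `η_x ρ_x − η_c ρ_c`, paired with the separable element `M_c` of a separable
POVM, gives `η_c tr(ρ_c M_c) ≤ η_x tr(ρ_x M_c)`; summing over `c` bounds every separable
strategy by `η_x`, and guessing `x` attains it. For a single step `l`, a local strategy beating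
`η_{x_l}`, run alongside the guesses `x_{l'}` on the other steps, would be a product LOCC
strategy beating `η_x`, because success probabilities of product strategies factorize.
-/

open Matrix BigOperators ComplexOrder

noncomputable section

/-- Tensor product of a family of local operators, one per party/step. -/
def tensorFam {m : ℕ} {ι : Fin m → Type*} [∀ k, Fintype (ι k)]
    (A : (k : Fin m) → Matrix (ι k) (ι k) ℂ) :
    Matrix ((k : Fin m) → ι k) ((k : Fin m) → ι k) ℂ :=
  Matrix.of fun i j => ∏ k, A k (i k) (j k)

/-- Separable operator: a sum of tensor products of positive semidefinite local operators. -/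
def IsSep {m : ℕ} {ι : Fin m → Type*} [∀ k, Fintype (ι k)]
    (E : Matrix ((k : Fin m) → ι k) ((k : Fin m) → ι k) ℂ) : Prop :=
  ∃ (S : Finset ℕ) (A : ℕ → (k : Fin m) → Matrix (ι k) (ι k) ℂ),
    (∀ s ∈ S, ∀ k, (A s k).PosSemidef) ∧ E = ∑ s ∈ S, tensorFam (A s)

/-- Separable state: separable with trace one. -/
def IsSepState {m : ℕ} {ι : Fin m → Type*} [∀ k, Fintype (ι k)]
    (σ : Matrix ((k : Fin m) → ι k) ((k : Fin m) → ι k) ℂ) : Prop :=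
  IsSep σ ∧ σ.trace = 1

/-- Block positive: nonnegative mean value on every separable state. -/
def IsBlockPos {m : ℕ} {ι : Fin m → Type*} [∀ k, Fintype (ι k)]
    (E : Matrix ((k : Fin m) → ι k) ((k : Fin m) → ι k) ℂ) : Prop :=
  ∀ σ, IsSepState σ → 0 ≤ ((E * σ).trace).re

def IsPOVM {α N : Type*} [Fintype α] [Fintype N] [DecidableEq N]
    (M : α → Matrix N N ℂ) : Prop :=
  (∀ i, (M i).PosSemidef) ∧ ∑ i, M i = 1

/-- Average success probability of a guessing strategy. -/
def succProb {α N : Type*} [Fintype α] [Fintype N]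
    (η : α → ℝ) (ρ M : α → Matrix N N ℂ) : ℝ :=
  ∑ i, η i * ((ρ i * M i).trace).re

/-- Tensor product over the sequence steps, with indices grouped by party:
party k holds its parts of all L systems. -/
def stepTensor {L m : ℕ} {ι : Fin L → Fin m → Type*} [∀ l k, Fintype (ι l k)]
    (A : (l : Fin L) → Matrix ((k : Fin m) → ι l k) ((k : Fin m) → ι l k) ℂ) :
    Matrix ((k : Fin m) → (l : Fin L) → ι l k) ((k : Fin m) → (l : Fin L) → ι l k) ℂ :=
  Matrix.of fun i j => ∏ l, A l (fun k => i k l) (fun k => j k l)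

section TensorFam
variable {m : ℕ} {ι : Fin m → Type*} [∀ k, Fintype (ι k)]

lemma trace_tensorFam (A : (k : Fin m) → Matrix (ι k) (ι k) ℂ) :
    (tensorFam A).trace = ∏ k, (A k).trace := by
  simp only [Matrix.trace, Matrix.diag, tensorFam, Matrix.of_apply]
  exact (Fintype.prod_sum fun k j => A k j j).symm

lemma tensorFam_smul (c : Fin m → ℂ) (A : (k : Fin m) → Matrix (ι k) (ι k) ℂ) :
    tensorFam (fun k => c k • A k) = (∏ k, c k) • tensorFam A := by
  ext i j
  simp [tensorFam, Finset.prod_mul_distrib]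

lemma tensorFam_eq_zero {A : (k : Fin m) → Matrix (ι k) (ι k) ℂ} {k₀ : Fin m}
    (h : A k₀ = 0) : tensorFam A = 0 := by
  ext i j
  exact Finset.prod_eq_zero (Finset.mem_univ k₀) (by simp [h])

lemma tensorFam_one [∀ k, DecidableEq (ι k)] :
    tensorFam (fun k => (1 : Matrix (ι k) (ι k) ℂ)) = 1 := by
  ext i j
  simp only [tensorFam, Matrix.of_apply, Matrix.one_apply]
  by_cases h : i = j
  · subst h; simp
  · obtain ⟨k, hk⟩ := Function.ne_iff.mp h
    rw [if_neg h]
    exact Finset.prod_eq_zero (Finset.mem_univ k) (by simp [hk])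

lemma isSep_tensorFam {A : (k : Fin m) → Matrix (ι k) (ι k) ℂ}
    (hA : ∀ k, (A k).PosSemidef) : IsSep (tensorFam A) :=
  ⟨{0}, fun _ => A, fun _ _ => hA, by simp⟩

lemma isSep_zero : IsSep (0 : Matrix ((k : Fin m) → ι k) ((k : Fin m) → ι k) ℂ) :=
  ⟨∅, fun _ _ => 0, by simp, by simp⟩

lemma isSep_one [∀ k, DecidableEq (ι k)] :
    IsSep (1 : Matrix ((k : Fin m) → ι k) ((k : Fin m) → ι k) ℂ) :=
  tensorFam_one (ι := ι) ▸ isSep_tensorFam fun _ => Matrix.PosSemidef.one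

lemma IsBlockPos.re_trace_mul_tensorFam_nonneg
    {W : Matrix ((k : Fin m) → ι k) ((k : Fin m) → ι k) ℂ} (hW : IsBlockPos W)
    {A : (k : Fin m) → Matrix (ι k) (ι k) ℂ} (hA : ∀ k, (A k).PosSemidef) :
    0 ≤ ((W * tensorFam A).trace).re := by
  by_cases hzero : ∃ k, A k = 0
  · obtain ⟨k, hk⟩ := hzero
    simp [tensorFam_eq_zero hk]
  push Not at hzero
  set r : Fin m → ℝ := fun k => (A k).trace.re
  have htr : ∀ k, (A k).trace = (r k : ℂ) := fun k =>
    Complex.eq_re_of_ofReal_le (by rw [Complex.ofReal_zero]; exact (hA k).trace_nonneg)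
  have hr : ∀ k, 0 < r k := fun k => by
    refine lt_of_le_of_ne (Complex.nonneg_iff.mp (hA k).trace_nonneg).1 fun h => hzero k ?_
    exact (hA k).trace_eq_zero_iff.mp (by rw [htr, ← h, Complex.ofReal_zero])
  -- normalizing every local factor to trace one turns `tensorFam A` into a separable state
  have hσ : IsSepState (tensorFam fun k => ((r k)⁻¹ : ℂ) • A k) := by
    refine ⟨isSep_tensorFam fun k => (hA k).smul ?_, ?_⟩
    · exact_mod_cast (inv_pos.mpr (hr k)).le
    · rw [trace_tensorFam]
      refine Finset.prod_eq_one fun k _ => ?_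
      rw [Matrix.trace_smul, htr, smul_eq_mul, inv_mul_cancel₀ (by exact_mod_cast (hr k).ne')]
  have h := hW _ hσ
  rw [tensorFam_smul, Matrix.mul_smul, Matrix.trace_smul, smul_eq_mul] at h
  simp only [← Complex.ofReal_inv, ← Complex.ofReal_prod, Complex.re_ofReal_mul] at h
  exact nonneg_of_mul_nonneg_right h (Finset.prod_pos fun k _ => inv_pos.mpr (hr k))

lemma IsBlockPos.re_trace_mul_nonneg {W E : Matrix ((k : Fin m) → ι k) ((k : Fin m) → ι k) ℂ}
    (hW : IsBlockPos W) (hE : IsSep E) : 0 ≤ ((W * E).trace).re := by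
  obtain ⟨S, A, hA, rfl⟩ := hE
  rw [Matrix.mul_sum, Matrix.trace_sum, Complex.re_sum]
  exact Finset.sum_nonneg fun s hs => hW.re_trace_mul_tensorFam_nonneg (hA s hs)

lemma succProb_le_of_isBlockPos {α : Type*} [Fintype α] [DecidableEq ((k : Fin m) → ι k)]
    {η : α → ℝ} {ρ M : α → Matrix ((k : Fin m) → ι k) ((k : Fin m) → ι k) ℂ} {x : α}
    (hbp : ∀ c, IsBlockPos ((η x : ℂ) • ρ x - (η c : ℂ) • ρ c))
    (hM : IsPOVM M) (hsep : ∀ c, IsSep (M c)) :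
    succProb η ρ M ≤ η x * (ρ x).trace.re := by
  have hterm : ∀ c, η c * (ρ c * M c).trace.re ≤ η x * (ρ x * M c).trace.re := fun c => by
    have h := (hbp c).re_trace_mul_nonneg (hsep c)
    simp only [Matrix.sub_mul, Matrix.smul_mul, Matrix.trace_sub, Matrix.trace_smul, smul_eq_mul,
      Complex.sub_re, Complex.re_ofReal_mul] at h
    linarith
  calc succProb η ρ M ≤ ∑ c, η x * (ρ x * M c).trace.re := Finset.sum_le_sum fun c _ => hterm c
    _ = η x * (ρ x * ∑ c, M c).trace.re := by
      rw [Matrix.mul_sum, Matrix.trace_sum, Complex.re_sum, Finset.mul_sum]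
    _ = η x * (ρ x).trace.re := by rw [hM.2, Matrix.mul_one]

end TensorFam

section StepTensor
variable {L m : ℕ} {ι : Fin L → Fin m → Type*} [∀ l k, Fintype (ι l k)]

lemma trace_stepTensor
    (A : (l : Fin L) → Matrix ((k : Fin m) → ι l k) ((k : Fin m) → ι l k) ℂ) :
    (stepTensor A).trace = ∏ l, (A l).trace := by
  simp only [Matrix.trace, Matrix.diag, stepTensor, Matrix.of_apply]
  rw [← Fintype.sum_equiv (Equiv.piComm fun l k => ι l k) _ _ fun _ => rfl]
  exact (Fintype.prod_sum fun l j => A l j j).symm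

lemma stepTensor_mul_stepTensor
    (A B : (l : Fin L) → Matrix ((k : Fin m) → ι l k) ((k : Fin m) → ι l k) ℂ) :
    stepTensor A * stepTensor B = stepTensor fun l => A l * B l := by
  ext i j
  simp only [Matrix.mul_apply, stepTensor, Matrix.of_apply]
  rw [← Fintype.sum_equiv (Equiv.piComm fun l k => ι l k) _ _ fun _ => rfl,
    Fintype.prod_sum fun l q => A l (fun k => i k l) q * B l q (fun k => j k l)]
  exact Finset.sum_congr rfl fun _ _ => Finset.prod_mul_distrib.symm

end StepTensor

lemma Matrix.IsHermitian.ofReal_re_trace_mul {N : Type*} [Fintype N] {A B : Matrix N N ℂ}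
    (hA : A.IsHermitian) (hB : B.IsHermitian) : (((A * B).trace.re : ℝ) : ℂ) = (A * B).trace := by
  rw [← Complex.conj_eq_iff_re, ← Complex.star_def, ← Matrix.trace_conjTranspose, Matrix.conjTranspose_mul, hA, hB,
    Matrix.trace_mul_comm]

lemma succProb_ite_eq {α N : Type*} [Fintype α] [DecidableEq α] [Fintype N] [DecidableEq N]
    (η : α → ℝ) (ρ : α → Matrix N N ℂ) (y : α) :
    succProb η ρ (fun i => if i = y then 1 else 0) = η y * (ρ y).trace.re := by
  simp [succProb, apply_ite]

lemma isPOVM_ite {α N : Type*} [Fintype α] [DecidableEq α] [Fintype N] [DecidableEq N] (y : α) :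
    IsPOVM fun i : α => if i = y then (1 : Matrix N N ℂ) else 0 :=
  ⟨fun i => by dsimp only; split_ifs; exacts [.one, .zero], by simp⟩

lemma succProb_stepTensor {L m : ℕ} {ι : Fin L → Fin m → Type*} [∀ l k, Fintype (ι l k)]
    {α : Fin L → Type*} [∀ l, Fintype (α l)] (η : (l : Fin L) → α l → ℝ)
    (ρ M : (l : Fin L) → α l → Matrix ((k : Fin m) → ι l k) ((k : Fin m) → ι l k) ℂ)
    (hρ : ∀ l i, (ρ l i).IsHermitian) (hM : ∀ l i, (M l i).IsHermitian) :
    succProb (fun c : (l : Fin L) → α l => ∏ l, η l (c l))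
      (fun c => stepTensor fun l => ρ l (c l)) (fun c => stepTensor fun l => M l (c l))
      = ∏ l, succProb (η l) (ρ l) (M l) := by
  unfold succProb
  rw [Fintype.prod_sum fun l i => η l i * ((ρ l i * M l i).trace).re]
  refine Finset.sum_congr rfl fun c _ => ?_
  rw [stepTensor_mul_stepTensor, trace_stepTensor, Finset.prod_mul_distrib,
    ← Finset.prod_congr rfl fun l _ => (hρ l (c l)).ofReal_re_trace_mul (hM l (c l)),
    ← Complex.ofReal_prod, Complex.ofReal_re]

lemma le_of_prod_update_le_prod {ι R : Type*} [Fintype ι] [DecidableEq ι] [CommRing R]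
    [LinearOrder R] [IsStrictOrderedRing R] {f : ι → R} (hf : ∀ i, 0 < f i) {i : ι} {b : R}
    (h : ∏ j, Function.update f i b j ≤ ∏ j, f j) : b ≤ f i := by
  rw [Finset.prod_update_of_mem (Finset.mem_univ i),
    Finset.prod_eq_mul_prod_sdiff_singleton_of_mem (Finset.mem_univ i)] at h
  exact le_of_mul_le_mul_right h (Finset.prod_pos fun j _ => hf j)

lemma succProb_le_of_forall_succProb_stepTensor_le {L m : ℕ} {ι : Fin L → Fin m → Type*}
    [∀ l k, Fintype (ι l k)] [∀ l k, DecidableEq (ι l k)]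
    {α : Fin L → Type*} [∀ l, Fintype (α l)] [∀ l, DecidableEq (α l)]
    {η : (l : Fin L) → α l → ℝ}
    {ρ : (l : Fin L) → α l → Matrix ((k : Fin m) → ι l k) ((k : Fin m) → ι l k) ℂ}
    {x : (l : Fin L) → α l} (hηx : ∀ l, 0 < η l (x l)) (hρ : ∀ l i, (ρ l i).IsHermitian)
    (htr : ∀ l, (ρ l (x l)).trace = 1)
    {C : (l : Fin L) → Set (α l → Matrix ((k : Fin m) → ι l k) ((k : Fin m) → ι l k) ℂ)}
    (hC : ∀ l, ∀ M ∈ C l, ∀ i, (M i).IsHermitian)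
    (htriv : ∀ l, (fun i => if i = x l then 1 else 0) ∈ C l)
    (hprod : ∀ N : (l : Fin L) → α l → Matrix ((k : Fin m) → ι l k) ((k : Fin m) → ι l k) ℂ,
      (∀ l, N l ∈ C l) →
        succProb (fun c : (l : Fin L) → α l => ∏ l, η l (c l))
          (fun c => stepTensor fun l => ρ l (c l)) (fun c => stepTensor fun l => N l (c l))
          ≤ ∏ l, η l (x l))
    {l₀ : Fin L} {M : α l₀ → Matrix ((k : Fin m) → ι l₀ k) ((k : Fin m) → ι l₀ k) ℂ}
    (hM : M ∈ C l₀) : succProb (η l₀) (ρ l₀) M ≤ η l₀ (x l₀) := by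
  set N : (l : Fin L) → α l → Matrix ((k : Fin m) → ι l k) ((k : Fin m) → ι l k) ℂ :=
    Function.update (fun l i => if i = x l then 1 else 0) l₀ M
  have hN : ∀ l, N l ∈ C l := fun l => by
    rcases eq_or_ne l l₀ with rfl | hl
    · simpa [N] using hM
    · simpa [N, hl] using htriv l
  have hvalue : ∀ l, succProb (η l) (ρ l) (N l)
      = Function.update (fun l => η l (x l)) l₀ (succProb (η l₀) (ρ l₀) M) l := fun l => by
    rcases eq_or_ne l l₀ with rfl | hl
    · simp [N]
    · simp [N, hl, succProb_ite_eq, htr]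
  refine le_of_prod_update_le_prod hηx ?_
  simpa only [succProb_stepTensor η ρ N hρ fun l => hC l _ (hN l), hvalue] using hprod N hN

theorem seq_locc_factorizable_of_blockpos_general {L m : ℕ} {ι : Fin L → Fin m → Type*}
    [∀ l k, Fintype (ι l k)] [∀ l k, DecidableEq (ι l k)]
    {n : Fin L → ℕ}
    (η : (l : Fin L) → Fin (n l) → ℝ)
    (ρ : (l : Fin L) → Fin (n l) → Matrix ((k : Fin m) → ι l k) ((k : Fin m) → ι l k) ℂ)
    (hη : ∀ l i, 0 < η l i)
    (hρ : ∀ l i, (ρ l i).PosSemidef ∧ (ρ l i).trace = 1)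
    (x : (l : Fin L) → Fin (n l))
    (hbp : ∀ c : (l : Fin L) → Fin (n l),
      IsBlockPos (ι := fun k => (l : Fin L) → ι l k)
        (((∏ l, η l (x l) : ℝ) : ℂ) • stepTensor (fun l => ρ l (x l)) -
         ((∏ l, η l (c l) : ℝ) : ℂ) • stepTensor (fun l => ρ l (c l))))
    -- per-step LOCC measurement classes
    (C : (l : Fin L) → Set (Fin (n l) → Matrix ((k : Fin m) → ι l k) ((k : Fin m) → ι l k) ℂ))
    (hC : ∀ l, ∀ M ∈ C l, IsPOVM M ∧ ∀ i, IsSep (M i))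
    (htriv : ∀ l, ∀ y : Fin (n l),
      (fun i => if i = y then (1 : Matrix ((k : Fin m) → ι l k) ((k : Fin m) → ι l k) ℂ) else 0) ∈ C l)
    -- LOCC measurement class on the whole sequence space
    (Cp : Set (((l : Fin L) → Fin (n l)) →
      Matrix ((k : Fin m) → (l : Fin L) → ι l k) ((k : Fin m) → (l : Fin L) → ι l k) ℂ))
    (hCp : ∀ M ∈ Cp, IsPOVM M ∧ ∀ c, IsSep (ι := fun k => (l : Fin L) → ι l k) (M c))
    (htrivp : ∀ y : (l : Fin L) → Fin (n l),
      (fun c => if c = y then (1 : Matrix ((k : Fin m) → (l : Fin L) → ι l k) ((k : Fin m) → (l : Fin L) → ι l k) ℂ) else 0) ∈ Cp)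
    (hclosed : ∀ M : (l : Fin L) → Fin (n l) → Matrix ((k : Fin m) → ι l k) ((k : Fin m) → ι l k) ℂ,
      (∀ l, M l ∈ C l) → (fun c => stepTensor (fun l => M l (c l))) ∈ Cp)
    (pL : Fin L → ℝ) (hpL : ∀ l, IsLUB ((fun M => succProb (η l) (ρ l) M) '' C l) (pL l))
    (pLtot : ℝ)
    (hpLtot : IsLUB ((fun M => succProb (fun c : (l : Fin L) → Fin (n l) => ∏ l, η l (c l))
      (fun c => stepTensor (fun l => ρ l (c l))) M) '' Cp) pLtot)
    (pSEPtot : ℝ)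
    (hpSEPtot : IsLUB ((fun M => succProb (fun c : (l : Fin L) → Fin (n l) => ∏ l, η l (c l))
      (fun c => stepTensor (fun l => ρ l (c l))) M) ''
      {M | IsPOVM M ∧ ∀ c, IsSep (ι := fun k => (l : Fin L) → ι l k) (M c)}) pSEPtot) :
    pLtot = ∏ l, η l (x l) ∧ pSEPtot = pLtot ∧
    pLtot = ∏ l, pL l ∧ ∀ l, pL l = η l (x l) := by
  have htr : ∀ c : (l : Fin L) → Fin (n l), (stepTensor fun l => ρ l (c l)).trace = 1 :=
    fun c => by simp only [trace_stepTensor, (hρ _ _).2, Finset.prod_const_one]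
  have hSEP_le : ∀ M : ((l : Fin L) → Fin (n l)) →
      Matrix ((k : Fin m) → (l : Fin L) → ι l k) ((k : Fin m) → (l : Fin L) → ι l k) ℂ,
      IsPOVM M → (∀ c, IsSep (ι := fun k => (l : Fin L) → ι l k) (M c)) →
      succProb (fun c : (l : Fin L) → Fin (n l) => ∏ l, η l (c l))
        (fun c => stepTensor fun l => ρ l (c l)) M ≤ ∏ l, η l (x l) := fun M hM hsep => by
    simpa [htr x] using succProb_le_of_isBlockPos (ι := fun k => (l : Fin L) → ι l k)
      (η := fun c : (l : Fin L) → Fin (n l) => ∏ l, η l (c l))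
      (ρ := fun c => stepTensor fun l => ρ l (c l)) hbp hM hsep
  have hguess_x : succProb (fun c : (l : Fin L) → Fin (n l) => ∏ l, η l (c l))
      (fun c => stepTensor fun l => ρ l (c l)) (fun c => if c = x then 1 else 0)
        = ∏ l, η l (x l) := by
    simp [succProb_ite_eq, htr x]
  have hLtot : pLtot = ∏ l, η l (x l) := hpLtot.unique <| IsGreatest.isLUB
    ⟨⟨_, htrivp x, hguess_x⟩, mem_upperBounds.2 <| Set.forall_mem_image.2 fun M hM =>
      hSEP_le M (hCp M hM).1 (hCp M hM).2⟩
  have hSEPtot : pSEPtot = ∏ l, η l (x l) := hpSEPtot.unique <| IsGreatest.isLUB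
    ⟨⟨_, ⟨isPOVM_ite x, fun c => by split_ifs; exacts [isSep_one, isSep_zero]⟩,
      hguess_x⟩, mem_upperBounds.2 <| Set.forall_mem_image.2 fun M hM => hSEP_le M hM.1 hM.2⟩
  have hpL_eq : ∀ l, pL l = η l (x l) := fun l => (hpL l).unique <| IsGreatest.isLUB
    ⟨⟨_, htriv l (x l), by simp [succProb_ite_eq, (hρ l (x l)).2]⟩,
      mem_upperBounds.2 <| Set.forall_mem_image.2 fun M hM =>
        succProb_le_of_forall_succProb_stepTensor_le (fun l => hη l (x l))
          (fun l i => (hρ l i).1.isHermitian) (fun l => (hρ l (x l)).2)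
          (fun l M hM i => ((hC l M hM).1.1 i).isHermitian) (fun l => htriv l (x l))
          (fun N hN => hSEP_le _ (hCp _ (hclosed N hN)).1 (hCp _ (hclosed N hN)).2) hM⟩
  exact ⟨hLtot, hSEPtot.trans hLtot.symm,
    hLtot.trans (Finset.prod_congr rfl fun l _ => (hpL_eq l).symm), hpL_eq⟩

/-- if η_x ρ_x − η_c ρ_c is block positive (w.r.t. the m parties) for all
sequences c, then p_L(⊗E^l) = p_SEP(⊗E^l) = η_x, the optimal LOCC discrimination is
factorizable, and p_L(E^l) = η^l_{x_l} for each l. -/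
theorem seq_locc_factorizable_of_blockpos {L m : ℕ} {ι : Fin L → Fin m → Type*}
    [∀ l k, Fintype (ι l k)] [∀ l k, DecidableEq (ι l k)]
    {n : Fin L → ℕ}
    (η : (l : Fin L) → Fin (n l) → ℝ)
    (ρ : (l : Fin L) → Fin (n l) → Matrix ((k : Fin m) → ι l k) ((k : Fin m) → ι l k) ℂ)
    (hη : ∀ l i, 0 < η l i) (hsum : ∀ l, ∑ i, η l i = 1)
    (hρ : ∀ l i, (ρ l i).PosSemidef ∧ (ρ l i).trace = 1)
    (x : (l : Fin L) → Fin (n l))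
    (hbp : ∀ c : (l : Fin L) → Fin (n l),
      IsBlockPos (ι := fun k => (l : Fin L) → ι l k)
        (((∏ l, η l (x l) : ℝ) : ℂ) • stepTensor (fun l => ρ l (x l)) -
         ((∏ l, η l (c l) : ℝ) : ℂ) • stepTensor (fun l => ρ l (c l))))
    -- per-step LOCC measurement classes
    (C : (l : Fin L) → Set (Fin (n l) → Matrix ((k : Fin m) → ι l k) ((k : Fin m) → ι l k) ℂ))
    (hC : ∀ l, ∀ M ∈ C l, IsPOVM M ∧ ∀ i, IsSep (M i))
    (htriv : ∀ l, ∀ y : Fin (n l),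
      (fun i => if i = y then (1 : Matrix ((k : Fin m) → ι l k) ((k : Fin m) → ι l k) ℂ) else 0) ∈ C l)
    -- LOCC measurement class on the whole sequence space
    (Cp : Set (((l : Fin L) → Fin (n l)) →
      Matrix ((k : Fin m) → (l : Fin L) → ι l k) ((k : Fin m) → (l : Fin L) → ι l k) ℂ))
    (hCp : ∀ M ∈ Cp, IsPOVM M ∧ ∀ c, IsSep (ι := fun k => (l : Fin L) → ι l k) (M c))
    (htrivp : ∀ y : (l : Fin L) → Fin (n l),
      (fun c => if c = y then (1 : Matrix ((k : Fin m) → (l : Fin L) → ι l k) ((k : Fin m) → (l : Fin L) → ι l k) ℂ) else 0) ∈ Cp)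
    (hclosed : ∀ M : (l : Fin L) → Fin (n l) → Matrix ((k : Fin m) → ι l k) ((k : Fin m) → ι l k) ℂ,
      (∀ l, M l ∈ C l) → (fun c => stepTensor (fun l => M l (c l))) ∈ Cp)
    (pL : Fin L → ℝ) (hpL : ∀ l, IsLUB ((fun M => succProb (η l) (ρ l) M) '' C l) (pL l))
    (pLtot : ℝ)
    (hpLtot : IsLUB ((fun M => succProb (fun c : (l : Fin L) → Fin (n l) => ∏ l, η l (c l))
      (fun c => stepTensor (fun l => ρ l (c l))) M) '' Cp) pLtot)
    (pSEPtot : ℝ)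
    (hpSEPtot : IsLUB ((fun M => succProb (fun c : (l : Fin L) → Fin (n l) => ∏ l, η l (c l))
      (fun c => stepTensor (fun l => ρ l (c l))) M) ''
      {M | IsPOVM M ∧ ∀ c, IsSep (ι := fun k => (l : Fin L) → ι l k) (M c)}) pSEPtot) :
    pLtot = ∏ l, η l (x l) ∧ pSEPtot = pLtot ∧
    pLtot = ∏ l, pL l ∧ ∀ l, pL l = η l (x l) :=
  seq_locc_factorizable_of_blockpos_general η ρ hη hρ x hbp C hC htriv Cp hCp htrivp hclosed pL hpL
    pLtot hpLtot pSEPtot hpSEPtot
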